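/- arXiv:1812.10880 — 5 statements merged into one kernel-verified Lean document; each statement's English description precedes it below -/
import Mathlib

section
/- Let Γ = (V,E) be a finite connected d-regular graph for some d ≥ 3, let G ≤ Aut Γ with Γ G-edge-primitive, assume Γ is not isomorphic to K_{d,d}, let {u,v} ∈ E, and let N be a nontrivial normal subgroup of G. If P is a nontrivial normal Sylow p-subgroup of the edge-stabilizer N_{{u,v}} (for some prime p), then P is a Sylow p-subgroup of N. -/
open SimpleGraph

namespace EdgePrimitivePaper

/-! ### Group-theoretic preliminaries -/

/-- `N` is a minimal normal subgroup of `G`. -/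
def IsMinimalNormal {G : Type*} [Group G] (N : Subgroup G) : Prop :=
  N.Normal ∧ N ≠ ⊥ ∧ ∀ M : Subgroup G, M.Normal → M ≠ ⊥ → M ≤ N → M = N

/-- A finite group is almost simple if it has a unique minimal normal subgroup,
which is a nonabelian simple group. -/
def IsAlmostSimpleGroup (G : Type*) [Group G] : Prop :=
  ∃ N : Subgroup G, IsMinimalNormal N ∧ (∀ M : Subgroup G, IsMinimalNormal M → M = N) ∧
    IsSimpleGroup N ∧ ¬ (∀ x y : N, x * y = y * x)

/-- The socle of a group: the subgroup generated by all minimal normal subgroups. -/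
def socle (G : Type*) [Group G] : Subgroup G :=
  ⨆ (N : Subgroup G) (_ : IsMinimalNormal N), N

/-- `P` is a Sylow `p`-subgroup of the subgroup `H`, i.e. a maximal `p`-subgroup of `H`. -/
def IsSylowIn {G : Type*} [Group G] (p : ℕ) (P H : Subgroup G) : Prop :=
  P ≤ H ∧ IsPGroup p P ∧ ∀ Q : Subgroup G, Q ≤ H → IsPGroup p Q → P ≤ Q → Q = P

/-- The `p`-core `O_p(G)`: the largest normal `p`-subgroup of `G`
(here defined as the join of all normal `p`-subgroups). -/
def pCore (p : ℕ) (G : Type*) [Group G] : Subgroup G :=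
  ⨆ (N : Subgroup G) (_ : N.Normal ∧ IsPGroup p N), N

/-! ### Graphs, automorphisms, stabilizers -/

variable {V : Type*} (Γ : SimpleGraph V)

variable {G : Type*} [Group G] (φ : G →* (Γ ≃g Γ))

/-- The stabilizer in `G` (acting on `Γ` through `φ`) of a vertex `v`. -/
def vStab (v : V) : Subgroup G where
  carrier := {g | φ g v = v}
  one_mem' := by simp
  mul_mem' := by
    intro a b ha hb
    simp only [Set.mem_setOf_eq, map_mul, RelIso.mul_apply] at *
    rw [hb, ha]
  inv_mem' := by
    intro a ha
    simp only [Set.mem_setOf_eq, map_inv] at *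
    conv_lhs => rw [← ha]
    exact RelIso.inv_apply_self _ _

/-- The setwise stabilizer in `G` of an unordered pair `e` of vertices. -/
def eStab (e : Sym2 V) : Subgroup G where
  carrier := {g | Sym2.map (φ g) e = e}
  one_mem' := by simp
  mul_mem' := by
    intro a b ha hb
    simp only [Set.mem_setOf_eq, map_mul] at *
    rw [RelIso.coe_mul, ← Sym2.map_map, hb, ha]
  inv_mem' := by
    intro a ha
    simp only [Set.mem_setOf_eq, map_inv] at *
    conv_lhs => rw [← ha]
    rw [Sym2.map_map]
    have hcomp : ⇑(φ a)⁻¹ ∘ ⇑(φ a) = id := funext fun x => RelIso.inv_apply_self _ _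
    rw [hcomp, Sym2.map_id, id_eq]

/-- The arc stabilizer `G_{uv}`. -/
def aStab (u v : V) : Subgroup G := vStab Γ φ u ⊓ vStab Γ φ v

/-- `G` is transitive on the vertices of `Γ`. -/
def IsVertexTransitive : Prop := ∀ u v : V, ∃ g : G, φ g u = v

/-- `G` is transitive on the edge set of `Γ` (which is required to be nonempty). -/
def IsEdgeTransitive : Prop :=
  Γ.edgeSet.Nonempty ∧ ∀ e₁ ∈ Γ.edgeSet, ∀ e₂ ∈ Γ.edgeSet, ∃ g : G, Sym2.map (φ g) e₁ = e₂

/-- `Γ` is `G`-edge-primitive: `G` is transitive on edges and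
every edge stabilizer is a maximal subgroup of `G`. -/
def IsEdgePrimitive : Prop :=
  IsEdgeTransitive Γ φ ∧ ∀ e ∈ Γ.edgeSet, IsCoatom (eStab Γ φ e)

/-- An `s`-arc of `Γ`: a sequence of `s+1` vertices, consecutive ones adjacent,
with no immediate returns. -/
def IsSArc (s : ℕ) (p : Fin (s + 1) → V) : Prop :=
  (∀ (i : ℕ) (h : i + 1 ≤ s), Γ.Adj (p ⟨i, by omega⟩) (p ⟨i + 1, by omega⟩)) ∧
  (∀ (i : ℕ) (h : i + 2 ≤ s), p ⟨i, by omega⟩ ≠ p ⟨i + 2, by omega⟩)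

/-- `Γ` is `(G,s)`-arc-transitive: `Γ` has an `s`-arc and `G` is transitive on `s`-arcs. -/
def IsSArcTransitive (s : ℕ) : Prop :=
  (∃ p, IsSArc Γ s p) ∧
    ∀ p q, IsSArc Γ s p → IsSArc Γ s q → ∃ g : G, ∀ i, φ g (p i) = q i

/-- `N` (a subgroup of `G`) is transitive on the arcs of `Γ`. -/
def SubgroupArcTransitive (N : Subgroup G) : Prop :=
  ∀ a b c d : V, Γ.Adj a b → Γ.Adj c d → ∃ g ∈ N, φ g a = c ∧ φ g b = d

/-- `N` (a subgroup of `G`) is transitive on the vertices of `Γ`. -/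
def SubgroupVertexTransitive (N : Subgroup G) : Prop :=
  ∀ u v : V, ∃ g ∈ N, φ g u = v

/-- The permutation of the neighbourhood `Γ(v)` induced by an element of `G_v`. -/
def localPerm (v : V) (g : ↥(vStab Γ φ v)) : Equiv.Perm (Γ.neighborSet v) where
  toFun x := ⟨φ (g : G) x, by
    have hx : Γ.Adj v x := x.2
    have hgv : φ (g : G) v = v := g.2
    have := (φ (g : G)).map_rel_iff.mpr hx
    rwa [hgv] at this⟩
  invFun x := ⟨φ (g : G)⁻¹ x, by
    have hx : Γ.Adj v x := x.2
    have hgv : φ (g : G) v = v := g.2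
    have hgv' : φ (g : G)⁻¹ v = v := by
      rw [map_inv]
      have h2 := RelIso.inv_apply_self (φ (g : G)) v
      rwa [hgv] at h2
    have := (φ (g : G)⁻¹).map_rel_iff.mpr hx
    rwa [hgv'] at this⟩
  left_inv x := by
    ext
    simp only [map_inv]
    exact RelIso.inv_apply_self _ _
  right_inv x := by
    ext
    simp only [map_inv]
    exact RelIso.apply_inv_self _ _

/-- The homomorphism from `G_v` to the permutation group of the neighbourhood `Γ(v)`,
i.e. the local action of `G_v` on `Γ(v)`. -/
def localHom (v : V) : ↥(vStab Γ φ v) →* Equiv.Perm (Γ.neighborSet v) where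
  toFun := localPerm Γ φ v
  map_one' := by
    ext x
    simp [localPerm]
  map_mul' g h := by
    ext x
    simp [localPerm, RelIso.mul_apply]

/-- The permutation group `G_v^{Γ(v)}` induced by `G_v` on `Γ(v)`. -/
def localGroup (v : V) : Subgroup (Equiv.Perm (Γ.neighborSet v)) :=
  (localHom Γ φ v).range

/-- The permutation group induced on `Γ(v)` by a subgroup `H ≤ G_v`. -/
def inducedLocal (H : Subgroup G) (v : V) : Subgroup (Equiv.Perm (Γ.neighborSet v)) :=
  Subgroup.map (localHom Γ φ v) (H.subgroupOf (vStab Γ φ v))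

/-- The kernel `G_v^{[1]}` of the action of `G_v` on `Γ(v)`, as a subgroup of `G`. -/
def localKernel (v : V) : Subgroup G :=
  Subgroup.map (vStab Γ φ v).subtype (localHom Γ φ v).ker

/-- `Γ` is `G`-locally primitive: every `G_v^{Γ(v)}` is a primitive permutation group,
i.e. transitive with maximal point stabilizers. -/
def IsLocallyPrimitive : Prop :=
  ∀ v : V, (∀ x y : Γ.neighborSet v, ∃ σ ∈ localGroup Γ φ v, σ x = y) ∧
    ∀ x : Γ.neighborSet v, IsCoatom (MulAction.stabilizer (localGroup Γ φ v) x)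

end EdgePrimitivePaper

/-!
Since `N ⊴ A`, the edge stabilizer `E = A_{{u,v}}` normalizes `N_{{u,v}} = N ∩ E`, hence also its
normal Sylow subgroup `P`. As `E` is maximal in `A`, the normalizer of `P` is `E` or `A`. If it is
`A`, then `P` is a normal subgroup fixing one edge, so by edge-transitivity it fixes every edge;
since every vertex lies on two edges, `P = 1`. Otherwise `N_N(P) = N_{{u,v}}`, in which `P` is
Sylow, and because normalizers grow in `p`-groups, `P` is Sylow in `N`.
-/

open Subgroup

namespace EdgePrimitivePaper

section Sylow

variable {G : Type*} [Group G] {p : ℕ} {P H N : Subgroup G}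

theorem IsSylowIn.normalizer_le_normalizer (hP : IsSylowIn p P H)
    (hHP : H ≤ normalizer (P : Set G)) :
    normalizer (H : Set G) ≤ normalizer (P : Set G) := by
  obtain ⟨hPH, hPp, hPmax⟩ := hP
  refine le_normalizer_iff.mpr fun g hg x hx => ?_
  have hPgH : P.map (MulAut.conj g).toMonoidHom ≤ H := by
    rw [← mem_normalizer_iff_map_conj_eq.mp hg]
    exact map_mono hPH
  -- `P` is normal in `H`, so it absorbs every `p`-subgroup of `H`, in particular its conjugate.
  have hsup := hPmax _ (sup_le hPgH hPH)
    ((hPp.map _).to_sup_of_normal_right' hPp (hPgH.trans hHP)) le_sup_right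
  exact sup_eq_right.mp hsup ⟨x, hx, rfl⟩

theorem IsSylowIn.of_inf_normalizer [Finite G] [Fact p.Prime]
    (hP : IsSylowIn p P (N ⊓ normalizer (P : Set G))) : IsSylowIn p P N := by
  obtain ⟨hPH, hPp, hPmax⟩ := hP
  refine ⟨hPH.trans inf_le_left, hPp, fun Q hQN hQp hPQ => ?_⟩
  have hself : (normalizer P).subgroupOf Q = P.subgroupOf Q := by
    have hK := hPmax (Q ⊓ normalizer P) (inf_le_inf_right _ hQN) (hQp.to_le inf_le_left)
      (le_inf hPQ le_normalizer)
    rw [← inf_subgroupOf_left, hK]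
  -- In the nilpotent group `Q`, only `Q` itself is self-normalizing.
  have : Group.IsNilpotent Q := hQp.isNilpotent
  have htop := (normalizerCondition_iff_only_full_group_self_normalizing.mp
    Group.normalizerCondition_of_isNilpotent _ (by rw [← subgroupOf_normalizer_eq hPQ, hself]))
  exact le_antisymm (subgroupOf_eq_top.mp htop) hPQ

end Sylow

section Graph

variable {V : Type*} {Γ : SimpleGraph V} {G : Type*} [Group G] {φ : G →* (Γ ≃g Γ)}

theorem normal_le_eStab_of_isEdgeTransitive (hET : IsEdgeTransitive Γ φ) {M : Subgroup G}
    [M.Normal] {e e' : Sym2 V} (he : e ∈ Γ.edgeSet) (he' : e' ∈ Γ.edgeSet)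
    (hMe : M ≤ eStab Γ φ e) : M ≤ eStab Γ φ e' := by
  obtain ⟨g, rfl⟩ := hET.2 e he e' he'
  intro x hx
  have hfix : Sym2.map (φ (g⁻¹ * x * g)) e = e :=
    hMe (by simpa using ‹M.Normal›.conj_mem x hx g⁻¹)
  have hxg : x * g = g * (g⁻¹ * x * g) := by group
  show Sym2.map (φ x) (Sym2.map (φ g) e) = Sym2.map (φ g) e
  rw [Sym2.map_map, ← RelIso.coe_mul, ← map_mul, hxg, map_mul, RelIso.coe_mul, ← Sym2.map_map,
    hfix]

theorem eq_one_of_forall_map_edge_eq [Γ.LocallyFinite] (hdeg : ∀ w, 1 < Γ.degree w)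
    {f : Γ ≃g Γ} (hf : ∀ e ∈ Γ.edgeSet, Sym2.map f e = e) : f = 1 := by
  refine RelIso.coe_fn_injective (funext fun w => ?_)
  obtain ⟨a, ha, b, hb, hab⟩ := Finset.one_lt_card.mp (hdeg w)
  have hwa := hf s(w, a) ((Γ.mem_neighborFinset w a).mp ha)
  have hwb := hf s(w, b) ((Γ.mem_neighborFinset w b).mp hb)
  rw [Sym2.map_mk, Sym2.eq_iff] at hwa hwb
  -- `f w` is an endpoint of both edges, and `w` is their only common endpoint.
  rcases hwa with ⟨h, -⟩ | ⟨ha', -⟩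
  · exact h
  rcases hwb with ⟨h, -⟩ | ⟨hb', -⟩
  · exact h
  exact absurd (ha'.symm.trans hb') hab

theorem eq_bot_of_normal_le_eStab [Γ.LocallyFinite] (hdeg : ∀ w, 1 < Γ.degree w)
    (hφ : Function.Injective φ) (hET : IsEdgeTransitive Γ φ) {M : Subgroup G} [M.Normal]
    {e : Sym2 V} (he : e ∈ Γ.edgeSet) (hMe : M ≤ eStab Γ φ e) : M = ⊥ :=
  (eq_bot_iff_forall M).mpr fun x hx => hφ <| by
    rw [map_one]
    exact eq_one_of_forall_map_edge_eq hdeg fun e' he' =>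
      normal_le_eStab_of_isEdgeTransitive hET he he' hMe hx

end Graph

end EdgePrimitivePaper

open EdgePrimitivePaper in
theorem stmt_3_general {V : Type*} [Fintype V] (Γ : SimpleGraph V) [DecidableRel Γ.Adj]
    (d : ℕ) (hd : 3 ≤ d) (hreg : Γ.IsRegularOfDegree d)
    (A : Subgroup (Γ ≃g Γ))
    (hprim : IsEdgePrimitive Γ A.subtype)
    {u v : V} (huv : s(u, v) ∈ Γ.edgeSet)
    (N : Subgroup A) (hN : N.Normal)
    (p : ℕ) (hp : p.Prime) (P : Subgroup A) (hPbot : P ≠ ⊥)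
    (hPnormal : ∀ g ∈ N ⊓ eStab Γ A.subtype s(u, v), ∀ x ∈ P, g * x * g⁻¹ ∈ P)
    (hPsyl : IsSylowIn p P (N ⊓ eStab Γ A.subtype s(u, v))) :
    IsSylowIn p P N := by
  have : Fact p.Prime := ⟨hp⟩
  have : Finite (Γ ≃g Γ) := Finite.of_injective _ RelIso.toEquiv_injective
  set E := eStab Γ A.subtype s(u, v)
  have hEnormalizes : E ≤ normalizer (N ⊓ E : Subgroup A) :=
    (le_inf le_normalizer_of_normal le_normalizer).trans inf_normalizer_le_normalizer_inf
  have hEP : E ≤ normalizer P :=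
    hEnormalizes.trans (IsSylowIn.normalizer_le_normalizer hPsyl (le_normalizer_iff.mpr hPnormal))
  rcases (hprim.2 _ huv).le_iff.mp hEP with htop | hnormalizer
  · have : P.Normal := normalizer_eq_top_iff.mp htop
    exact absurd (eq_bot_of_normal_le_eStab (fun w => by rw [hreg w]; omega)
      A.subtype_injective hprim.1 huv (hPsyl.1.trans inf_le_right)) hPbot
  · exact IsSylowIn.of_inf_normalizer (by rwa [hnormalizer])

open EdgePrimitivePaper in
/-- **Theorem 3.3(1).** Under edge-primitivity with `Γ ≇ K_{d,d}`: if `P` is a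
nontrivial normal Sylow `p`-subgroup of the edge stabilizer `N_{{u,v}}` of a nontrivial
normal subgroup `N` of `G`, then `P` is a Sylow `p`-subgroup of `N`. -/
theorem stmt_3 {V : Type*} [Fintype V] (Γ : SimpleGraph V) [DecidableRel Γ.Adj]
    (d : ℕ) (hd : 3 ≤ d) (hconn : Γ.Connected) (hreg : Γ.IsRegularOfDegree d)
    (A : Subgroup (Γ ≃g Γ))
    (hprim : IsEdgePrimitive Γ A.subtype)
    (hnotbip : ¬ Nonempty (Γ ≃g completeBipartiteGraph (Fin d) (Fin d)))
    {u v : V} (huv : s(u, v) ∈ Γ.edgeSet)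
    (N : Subgroup A) (hN : N.Normal) (hNbot : N ≠ ⊥)
    (p : ℕ) (hp : p.Prime) (P : Subgroup A) (hPbot : P ≠ ⊥)
    (hPnormal : ∀ g ∈ N ⊓ eStab Γ A.subtype s(u, v), ∀ x ∈ P, g * x * g⁻¹ ∈ P)
    (hPsyl : IsSylowIn p P (N ⊓ eStab Γ A.subtype s(u, v))) :
    IsSylowIn p P N :=
  stmt_3_general Γ d hd hreg A hprim huv N hN p hp P hPbot hPnormal hPsyl
end

section
/- Let Γ = (V,E) be a finite connected d-regular graph for some d ≥ 3, let G ≤ Aut Γ with Γ G-edge-primitive, let {u,v} ∈ E, and let N be a nontrivial normal subgroup of G. If N acts transitively on V, then 2·|N_v| = d·|N_{{u,v}}|; if N is intransitive on V, then N_{{u,v}} = N_{uv} and |N_v| = d·|N_{uv}|. In particular, N_v ≠ 1 and N_v ≠ N_{{u,v}}. -/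
open SimpleGraph

open scoped Pointwise


/-! A nontrivial normal subgroup `N` of an edge-primitive group `G` cannot fix an edge: it would
then fix every edge, hence every vertex, since every vertex lies on two edges. By maximality of
the edge stabilizer, `N G_{{u,v}} = G`, so `N` is transitive on edges. If `N` is also
transitive on vertices, orbit–stabilizer on vertices and on edges together with `2|E| = d|V|`
gives `2|N_v| = d|N_{{u,v}}|`. Otherwise `N` has exactly the two orbits `N•u` and `N•v`, and
every edge joins them; so no element of `N` swaps `u` and `v`, and `N_v` is transitive on the
`d` neighbours of `v`. -/

open MulAction

namespace Sym2

variable {M α : Type*}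

instance instMulAction [Monoid M] [MulAction M α] : MulAction M (Sym2 α) where
  smul g := Sym2.map (g • ·)
  one_smul e := by
    change Sym2.map _ e = e
    simp only [one_smul, Sym2.map_id', id]
  mul_smul g h e := by
    change Sym2.map _ e = Sym2.map _ (Sym2.map _ e)
    simp only [Sym2.map_map, Function.comp_def, mul_smul]

@[simp]
theorem smul_mk [Monoid M] [MulAction M α] (g : M) (a b : α) : g • s(a, b) = s(g • a, g • b) :=
  rfl

theorem apply_eq_self_of_map_eq_self {f : α → α} {x y z : α} (hyz : y ≠ z)
    (hy : Sym2.map f s(x, y) = s(x, y)) (hz : Sym2.map f s(x, z) = s(x, z)) : f x = x := by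
  rw [Sym2.map_mk, Sym2.eq_iff] at hy hz
  grind

end Sym2

namespace MulAction

variable {G X : Type*} [Group G] [MulAction G X]

theorem card_subgroup_eq_ncard_orbit_mul_card_inf_stabilizer (H : Subgroup G) (x : X) :
    Nat.card H = (orbit H x).ncard * Nat.card ↥(H ⊓ stabilizer G x) := by
  rw [← index_stabilizer, ← (stabilizer H x).card_mul_index, mul_comm]
  have : stabilizer H x = (H ⊓ stabilizer G x).subgroupOf H := by
    rw [Subgroup.inf_subgroupOf_left]
    rfl
  rw [this, Nat.card_congr (Subgroup.subgroupOfEquivOfLe inf_le_left).toEquiv]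

theorem le_stabilizer_smul_of_normal {N : Subgroup G} [N.Normal] {x : X}
    (hN : N ≤ stabilizer G x) (g : G) : N ≤ stabilizer G (g • x) := fun n hn => by
  have hconj : g⁻¹ * n * g ∈ stabilizer G x := hN (‹N.Normal›.conj_mem' n hn g)
  rw [mem_stabilizer_iff] at hconj ⊢
  calc n • g • x = g • (g⁻¹ * n * g) • x := by rw [smul_smul, smul_smul]; group
    _ = g • x := by rw [hconj]

theorem orbit_subgroup_eq_orbit_of_sup_stabilizer_eq_top {N : Subgroup G} [N.Normal] {x : X}
    (h : N ⊔ stabilizer G x = ⊤) : orbit N x = orbit G x := by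
  refine (orbit_subgroup_subset N x).antisymm ?_
  rintro _ ⟨g, rfl⟩
  obtain ⟨n, hn, s, hs, rfl⟩ : g ∈ (N : Set G) * stabilizer G x := by
    rw [← Subgroup.normal_mul, h]; trivial
  exact ⟨⟨n, hn⟩, by simp [mul_smul, mem_stabilizer_iff.mp hs]⟩

end MulAction

theorem Subgroup.ne_bot_and_ne_of_mul_card_eq {G : Type*} [Group G] [Finite G] {H K : Subgroup G}
    {a d : ℕ} (had : a < d) (h : a * Nat.card H = d * Nat.card K) : H ≠ ⊥ ∧ H ≠ K := by
  have hK : 0 < Nat.card K := Nat.card_pos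
  refine ⟨fun hH => ?_, fun hHK => ?_⟩
  · rw [hH, Subgroup.card_bot] at h
    nlinarith
  · rw [hHK] at h
    exact had.ne (Nat.eq_of_mul_eq_mul_right hK h)

namespace SimpleGraph

variable {V : Type*} [Fintype V] {Γ : SimpleGraph V} [DecidableRel Γ.Adj] {d : ℕ}

theorem IsRegularOfDegree.ncard_neighborSet (h : Γ.IsRegularOfDegree d) (v : V) :
    (Γ.neighborSet v).ncard = d := by
  rw [← coe_neighborFinset, Set.ncard_coe_finset, card_neighborFinset_eq_degree, h.degree_eq]

theorem IsRegularOfDegree.two_mul_ncard_edgeSet (h : Γ.IsRegularOfDegree d) :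
    2 * Γ.edgeSet.ncard = Nat.card V * d := by
  rw [← coe_edgeFinset, Set.ncard_coe_finset, ← sum_degrees_eq_twice_card_edges,
    Finset.sum_congr rfl fun x _ => h.degree_eq x, Finset.sum_const, smul_eq_mul,
    Finset.card_univ, Nat.card_eq_fintype_card]

end SimpleGraph

namespace EdgePrimitivePaper

open SimpleGraph

variable {V : Type*} {Γ : SimpleGraph V} {A : Subgroup (Γ ≃g Γ)}

theorem vStab_subtype_eq_stabilizer (v : V) : vStab Γ A.subtype v = stabilizer A v := rfl

theorem eStab_subtype_eq_stabilizer (e : Sym2 V) : eStab Γ A.subtype e = stabilizer A e := rfl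

theorem subgroupVertexTransitive_iff_isPretransitive (N : Subgroup A) :
    SubgroupVertexTransitive Γ A.subtype N ↔ IsPretransitive N V :=
  ⟨fun h => ⟨fun x y => by obtain ⟨g, hg, hgx⟩ := h x y; exact ⟨⟨g, hg⟩, hgx⟩⟩,
    fun h x y => by obtain ⟨g, hgx⟩ := exists_smul_eq N x y; exact ⟨g, g.2, hgx⟩⟩

theorem orbit_subset_edgeSet {e : Sym2 V} (he : e ∈ Γ.edgeSet) : orbit A e ⊆ Γ.edgeSet := by
  rintro _ ⟨g, rfl⟩
  exact (Iso.map_mem_edgeSet_iff (g : Γ ≃g Γ)).mpr he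

theorem IsEdgeTransitive.orbit_eq_edgeSet (hA : IsEdgeTransitive Γ A.subtype) {e : Sym2 V}
    (he : e ∈ Γ.edgeSet) : orbit A e = Γ.edgeSet :=
  (orbit_subset_edgeSet he).antisymm fun _ he' => hA.2 e he _ he'

theorem IsEdgeTransitive.eq_bot_of_le_stabilizer (hA : IsEdgeTransitive Γ A.subtype)
    (hdeg : ∀ x, (Γ.neighborSet x).Nontrivial) {N : Subgroup A} [N.Normal] {e : Sym2 V}
    (he : e ∈ Γ.edgeSet) (hNe : N ≤ stabilizer A e) : N = ⊥ := by
  have hfix_edges : ∀ n ∈ N, ∀ e' ∈ Γ.edgeSet, n • e' = e' := fun n hn e' he' => by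
    obtain ⟨g, rfl⟩ := (hA.orbit_eq_edgeSet he).symm ▸ he'
    exact le_stabilizer_smul_of_normal hNe g hn
  refine (Subgroup.eq_bot_iff_forall N).mpr fun n hn => Subtype.ext (RelIso.ext fun x => ?_)
  obtain ⟨y, hy, z, hz, hyz⟩ := hdeg x
  exact Sym2.apply_eq_self_of_map_eq_self hyz (hfix_edges n hn _ hy) (hfix_edges n hn _ hz)

theorem IsEdgePrimitive.orbit_eq_edgeSet_of_normal (hprim : IsEdgePrimitive Γ A.subtype)
    (hdeg : ∀ x, (Γ.neighborSet x).Nontrivial) {N : Subgroup A} [N.Normal] (hN : N ≠ ⊥)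
    {e : Sym2 V} (he : e ∈ Γ.edgeSet) : orbit N e = Γ.edgeSet := by
  have hsup : N ⊔ stabilizer A e = ⊤ := (hprim.2 e he).2 _ <|
    right_lt_sup.mpr fun hle => hN (hprim.1.eq_bot_of_le_stabilizer hdeg he hle)
  rw [orbit_subgroup_eq_orbit_of_sup_stabilizer_eq_top hsup, hprim.1.orbit_eq_edgeSet he]

section EdgeTransitiveNormalSubgroup

variable {N : Subgroup A} {u v : V}

theorem isPretransitive_of_mem_orbit (hE : orbit N s(u, v) = Γ.edgeSet)
    (hdeg : ∀ x, (Γ.neighborSet x).Nonempty) (hv : v ∈ orbit N u) : IsPretransitive N V := by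
  refine (isPretransitive_iff_orbit_eq_univ u).mpr (Set.eq_univ_of_forall fun x => ?_)
  obtain ⟨y, hxy⟩ := hdeg x
  obtain ⟨n, hn : n • s(u, v) = s(x, y)⟩ : s(x, y) ∈ orbit N s(u, v) := hE ▸ hxy
  rw [Sym2.smul_mk, Sym2.eq_iff] at hn
  rcases hn with ⟨rfl, -⟩ | ⟨-, rfl⟩
  · exact mem_orbit u n
  · exact mem_orbit_of_mem_orbit n hv

theorem inf_stabilizer_mk_eq_inf_aStab (hv : v ∉ orbit N u) :
    N ⊓ stabilizer A s(u, v) = N ⊓ aStab Γ A.subtype u v := by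
  ext g
  simp only [Subgroup.mem_inf]
  refine and_congr_right fun hg => ⟨fun hfix => ?_, fun ⟨hgu, hgv⟩ => ?_⟩
  · rw [mem_stabilizer_iff, Sym2.smul_mk, Sym2.eq_iff] at hfix
    rcases hfix with ⟨hgu, hgv⟩ | ⟨hgu, -⟩
    · exact ⟨hgu, hgv⟩
    · exact absurd ⟨⟨g, hg⟩, hgu⟩ hv
  · rw [mem_stabilizer_iff, Sym2.smul_mk]
    rw [show g • u = u from hgu, show g • v = v from hgv]

theorem orbit_inf_stabilizer_eq_neighborSet (hE : orbit N s(u, v) = Γ.edgeSet)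
    (hv : v ∉ orbit N u) (huv : Γ.Adj u v) :
    orbit ↥(N ⊓ stabilizer A v) u = Γ.neighborSet v := by
  ext y
  constructor
  · rintro ⟨g, rfl⟩
    have hgv : (g : A) • v = v := (Subgroup.mem_inf.mp g.2).2
    have hadj := (g : Γ ≃g Γ).map_adj_iff.mpr huv.symm
    rwa [show (g : Γ ≃g Γ) v = v from hgv] at hadj
  · intro hy
    obtain ⟨n, hn : n • s(u, v) = s(v, y)⟩ : s(v, y) ∈ orbit N s(u, v) := hE ▸ hy
    rw [Sym2.smul_mk, Sym2.eq_iff] at hn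
    rcases hn with ⟨hnu, -⟩ | ⟨hnu, hnv⟩
    · exact absurd ⟨n, hnu⟩ hv
    · exact ⟨⟨n, n.2, hnv⟩, hnu⟩

variable [Fintype V] [DecidableRel Γ.Adj] {d : ℕ}

theorem two_mul_card_inf_stabilizer_eq (hreg : Γ.IsRegularOfDegree d)
    (hE : orbit N s(u, v) = Γ.edgeSet) [IsPretransitive N V] :
    2 * Nat.card ↥(N ⊓ stabilizer A v) = d * Nat.card ↥(N ⊓ stabilizer A s(u, v)) := by
  have hV := card_subgroup_eq_ncard_orbit_mul_card_inf_stabilizer N v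
  have hEd := card_subgroup_eq_ncard_orbit_mul_card_inf_stabilizer N s(u, v)
  rw [orbit_eq_univ, Set.ncard_univ] at hV
  rw [hE] at hEd
  have : Nonempty V := ⟨v⟩
  refine Nat.eq_of_mul_eq_mul_left (Nat.card_pos (α := V)) ?_
  calc Nat.card V * (2 * Nat.card ↥(N ⊓ stabilizer A v)) = 2 * Nat.card N := by rw [hV]; ring
    _ = 2 * Γ.edgeSet.ncard * Nat.card ↥(N ⊓ stabilizer A s(u, v)) := by rw [hEd]; ring
    _ = _ := by rw [hreg.two_mul_ncard_edgeSet]; ring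

theorem card_inf_stabilizer_eq_of_notMem_orbit (hreg : Γ.IsRegularOfDegree d)
    (hE : orbit N s(u, v) = Γ.edgeSet) (hv : v ∉ orbit N u) (huv : Γ.Adj u v) :
    Nat.card ↥(N ⊓ stabilizer A v) = d * Nat.card ↥(N ⊓ aStab Γ A.subtype u v) := by
  rw [card_subgroup_eq_ncard_orbit_mul_card_inf_stabilizer _ u,
    orbit_inf_stabilizer_eq_neighborSet hE hv huv, hreg.ncard_neighborSet, inf_assoc,
    inf_comm (stabilizer A v)]
  rfl

end EdgeTransitiveNormalSubgroup

end EdgePrimitivePaper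

open EdgePrimitivePaper in
theorem stmt_7_general {V : Type*} [Fintype V] (Γ : SimpleGraph V) [DecidableRel Γ.Adj]
    (d : ℕ) (hd : 3 ≤ d) (hreg : Γ.IsRegularOfDegree d)
    (A : Subgroup (Γ ≃g Γ))
    (hprim : IsEdgePrimitive Γ A.subtype)
    {u v : V} (huv : s(u, v) ∈ Γ.edgeSet)
    (N : Subgroup A) (hN : N.Normal) (hNbot : N ≠ ⊥) :
    (SubgroupVertexTransitive Γ A.subtype N →
        2 * Nat.card ↥(N ⊓ vStab Γ A.subtype v) =
          d * Nat.card ↥(N ⊓ eStab Γ A.subtype s(u, v))) ∧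
    (¬ SubgroupVertexTransitive Γ A.subtype N →
        N ⊓ eStab Γ A.subtype s(u, v) = N ⊓ aStab Γ A.subtype u v ∧
        Nat.card ↥(N ⊓ vStab Γ A.subtype v) =
          d * Nat.card ↥(N ⊓ aStab Γ A.subtype u v)) ∧
    N ⊓ vStab Γ A.subtype v ≠ ⊥ ∧
    N ⊓ vStab Γ A.subtype v ≠ N ⊓ eStab Γ A.subtype s(u, v) := by
  rw [vStab_subtype_eq_stabilizer, eStab_subtype_eq_stabilizer]
  have hdeg (x : V) : (Γ.neighborSet x).Nontrivial :=
    Set.one_lt_ncard_iff_nontrivial.mp (by rw [hreg.ncard_neighborSet]; omega)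
  have hE : orbit N s(u, v) = Γ.edgeSet := hprim.orbit_eq_edgeSet_of_normal hdeg hNbot huv
  have hsep (ht : ¬ SubgroupVertexTransitive Γ A.subtype N) : v ∉ orbit N u := fun hv =>
    ht <| (subgroupVertexTransitive_iff_isPretransitive N).mpr <|
      isPretransitive_of_mem_orbit hE (fun x => (hdeg x).nonempty) hv
  have htrans (ht : SubgroupVertexTransitive Γ A.subtype N) :=
    have := (subgroupVertexTransitive_iff_isPretransitive N).mp ht
    two_mul_card_inf_stabilizer_eq hreg hE
  have hintrans (ht : ¬ SubgroupVertexTransitive Γ A.subtype N) :=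
    And.intro (inf_stabilizer_mk_eq_inf_aStab (hsep ht))
      (card_inf_stabilizer_eq_of_notMem_orbit hreg hE (hsep ht) huv)
  refine ⟨htrans, hintrans, ?_⟩
  have : Finite (Γ ≃g Γ) := FunLike.finite _
  by_cases ht : SubgroupVertexTransitive Γ A.subtype N
  · exact Subgroup.ne_bot_and_ne_of_mul_card_eq (by omega) (htrans ht)
  · obtain ⟨he, h⟩ := hintrans ht
    rw [he]
    exact Subgroup.ne_bot_and_ne_of_mul_card_eq (by omega) ((one_mul _).trans h)

open EdgePrimitivePaper in
/-- **Lemma 3.1.** For a nontrivial normal subgroup `N` of `G`: if `N` is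
vertex-transitive then `2|N_v| = d|N_{{u,v}}|`; if `N` is intransitive on vertices then
`N_{{u,v}} = N_{uv}` and `|N_v| = d|N_{uv}|`. In particular `N_v ≠ 1` and
`N_v ≠ N_{{u,v}}`. -/
theorem stmt_7 {V : Type*} [Fintype V] (Γ : SimpleGraph V) [DecidableRel Γ.Adj]
    (d : ℕ) (hd : 3 ≤ d) (hconn : Γ.Connected) (hreg : Γ.IsRegularOfDegree d)
    (A : Subgroup (Γ ≃g Γ))
    (hprim : IsEdgePrimitive Γ A.subtype)
    {u v : V} (huv : s(u, v) ∈ Γ.edgeSet)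
    (N : Subgroup A) (hN : N.Normal) (hNbot : N ≠ ⊥) :
    (SubgroupVertexTransitive Γ A.subtype N →
        2 * Nat.card ↥(N ⊓ vStab Γ A.subtype v) =
          d * Nat.card ↥(N ⊓ eStab Γ A.subtype s(u, v))) ∧
    (¬ SubgroupVertexTransitive Γ A.subtype N →
        N ⊓ eStab Γ A.subtype s(u, v) = N ⊓ aStab Γ A.subtype u v ∧
        Nat.card ↥(N ⊓ vStab Γ A.subtype v) =
          d * Nat.card ↥(N ⊓ aStab Γ A.subtype u v)) ∧
    N ⊓ vStab Γ A.subtype v ≠ ⊥ ∧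
    N ⊓ vStab Γ A.subtype v ≠ N ⊓ eStab Γ A.subtype s(u, v) :=
  stmt_7_general Γ d hd hreg A hprim huv N hN hNbot
end

section
/- Let Γ = (V,E) be a finite connected d-regular graph for some d ≥ 3 and let G ≤ Aut Γ with Γ G-edge-primitive. If Γ is not isomorphic to K_{d,d}, then G is insoluble and every edge-stabilizer G_{{u,v}} is a nonabelian group. -/
open SimpleGraph

/-!
Let `M = G_{{u,v}}`. The edge stabilizers are the conjugates of `M`, and an automorphism of a graph
of minimum degree at least two that fixes every edge is trivial, so `M` is core-free.

A nontrivial abelian normal subgroup `N` is then not contained in the maximal subgroup `M`, so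
`G = NM` and `N` is edge-transitive. If `N` maps `u` to `v`, commutativity makes the neighbours of
`u` other than `v` all equal, so the valency is at most two. Otherwise the two `N`-orbits separate
the ends of every edge, and `N` fixes pointwise the orbit of any vertex it fixes; hence two vertices
with a common neighbour have the same neighbourhood, and by connectivity `Γ ≅ K_{d,d}`. So `G` has
no nontrivial abelian normal subgroup, which for a soluble group means `G = 1`.

Now suppose `M` is abelian. Then `N_G(H) = M` for every `1 ≠ H ≤ M`. As `M` is self-normalizing, it
must contain an element swapping `u` and `v`, so `|M|` is even. For each prime `p ∣ |M|` a Sylow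
`p`-subgroup of `M` is Sylow in `G` and central in its normalizer `M`, so by Burnside's transfer
theorem it has a normal complement `K_p`, with `G' ≤ K_p` because `P` is abelian. The intersection
`K` of the `K_p` meets `M` trivially, so conjugation by an involution of `M` is a fixed-point-free
automorphism of `K`. Hence `K` is abelian and `G'' = 1`, contradicting insolubility.
-/

namespace SimpleGraph

variable {V : Type*} {Γ : SimpleGraph V}

theorem Connected.eq_univ_of_adj_mem (hconn : Γ.Connected) {s : Set V}
    (hs : ∀ ⦃x y⦄, Γ.Adj x y → x ∈ s → y ∈ s) (hne : s.Nonempty) : s = Set.univ := by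
  obtain ⟨u, hu⟩ := hne
  refine Set.eq_univ_of_forall fun v => ?_
  obtain ⟨p⟩ := hconn.preconnected u v
  induction p with
  | nil => exact hu
  | cons h _ ih => exact ih (hs h hu)

def isoCompleteBipartiteGraph (s : Set V) [DecidablePred (· ∈ s)]
    (h : ∀ x y, Γ.Adj x y ↔ (x ∈ s ↔ y ∉ s)) : Γ ≃g completeBipartiteGraph s ↥sᶜ where
  toEquiv := (Equiv.Set.sumCompl s).symm
  map_rel_iff' {x y} := by
    by_cases hx : x ∈ s <;> by_cases hy : y ∈ s <;>
      simp [Equiv.Set.sumCompl_symm_apply_of_mem, Equiv.Set.sumCompl_symm_apply_of_notMem, h,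
        hx, hy]

section Finite

variable [Fintype V] [DecidableRel Γ.Adj]

theorem nonempty_iso_completeBipartiteGraph_of_neighborSet_eq {d : ℕ} (hconn : Γ.Connected)
    (hreg : Γ.IsRegularOfDegree d) (hd : 0 < d)
    (h : ∀ ⦃x y z⦄, Γ.Adj x z → Γ.Adj y z → Γ.neighborSet x = Γ.neighborSet y) :
    Nonempty (Γ ≃g completeBipartiteGraph (Fin d) (Fin d)) := by
  classical
  obtain ⟨u⟩ := hconn.nonempty
  obtain ⟨v, huv⟩ := Γ.degree_pos_iff_exists_adj u |>.mp (hreg u ▸ hd)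
  have hv : ∀ x, Γ.Adj v x → Γ.neighborSet x = Γ.neighborSet u := fun x hx => h hx.symm huv
  have hu : ∀ y, Γ.Adj u y → Γ.neighborSet y = Γ.neighborSet v := fun y hy =>
    h hy.symm huv.symm
  have hdisj : ∀ x, Γ.Adj v x → ¬ Γ.Adj u x := fun x hvx hux => by
    have huv' : Γ.neighborSet u = Γ.neighborSet v := (hv x hvx).symm.trans (hu x hux)
    exact Γ.irrefl (show v ∈ Γ.neighborSet v from huv' ▸ huv)
  have hcover : ∀ x, Γ.Adj v x ∨ Γ.Adj u x := by
    refine Set.eq_univ_iff_forall.mp <|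
      hconn.eq_univ_of_adj_mem (s := {x | Γ.Adj v x ∨ Γ.Adj u x}) ?_ ⟨u, Or.inl huv.symm⟩
    rintro x y hxy (hx | hx)
    · exact Or.inr (show y ∈ Γ.neighborSet u from hv x hx ▸ hxy)
    · exact Or.inl (show y ∈ Γ.neighborSet v from hu x hx ▸ hxy)
  have hcompl : (Γ.neighborSet v)ᶜ = Γ.neighborSet u := by
    ext x
    exact ⟨fun hx => (hcover x).resolve_left hx, fun hx hvx => hdisj x hvx hx⟩
  have hadj : ∀ x y, Γ.Adj x y ↔ (x ∈ Γ.neighborSet v ↔ y ∉ Γ.neighborSet v) := by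
    intro x y
    rcases hcover x with hx | hx
    · rw [← mem_neighborSet, hv x hx, ← hcompl]
      simp [hx]
    · rw [← mem_neighborSet, hu x hx]
      simp [show ¬ Γ.Adj v x from fun hvx => hdisj x hvx hx]
  have hcard : ∀ w, Fintype.card (Γ.neighborSet w) = d := fun w => by
    rw [card_neighborSet_eq_degree, hreg w]
  exact ⟨(isoCompleteBipartiteGraph _ hadj).trans <| completeBipartiteGraphCongr
    (Fintype.equivFinOfCardEq (hcard v))
    ((Equiv.setCongr hcompl).trans (Fintype.equivFinOfCardEq (hcard u)))⟩

theorem exists_adj_ne {v : V} (h : 1 < Γ.degree v) (w : V) : ∃ x, Γ.Adj v x ∧ x ≠ w := by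
  rw [← card_neighborFinset_eq_degree] at h
  obtain ⟨x, hx, hxw⟩ := Finset.exists_mem_ne h w
  exact ⟨x, (mem_neighborFinset _ _ _).mp hx, hxw⟩

theorem eq_one_of_forall_sym2_map_eq (hdeg : ∀ v, 1 < Γ.degree v) {f : Γ ≃g Γ}
    (hf : ∀ ⦃x y⦄, Γ.Adj x y → Sym2.map f s(x, y) = s(x, y)) : f = 1 := by
  refine RelIso.ext fun x => ?_
  obtain ⟨y, hxy, -⟩ := exists_adj_ne (hdeg x) x
  obtain ⟨z, hxz, hzy⟩ := exists_adj_ne (hdeg x) y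
  have hy := hf hxy
  have hz := hf hxz
  simp only [Sym2.map_mk, Sym2.eq_iff] at hy hz
  change f x = x
  grind

end Finite

end SimpleGraph

namespace EdgePrimitivePaper

open Subgroup

section Solvable

variable {G : Type*} [Group G]

theorem subsingleton_of_isSolvable [Group.IsSolvable G]
    (h : ∀ N : Subgroup G, N.Normal → IsMulCommutative N → N = ⊥) : Subsingleton G := by
  obtain ⟨n, hn⟩ := Group.IsSolvable.solvable (G := G)
  suffices ∀ n, derivedSeries G n = ⊥ → (⊤ : Subgroup G) = ⊥ from
    Subgroup.subsingleton_iff.mp (subsingleton_iff_bot_eq_top.mp (this n hn).symm)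
  intro n
  induction n with
  | zero => exact id
  | succ n ih =>
    intro hbot
    refine ih (h _ (derivedSeries_normal G n) ?_)
    rw [← le_centralizer_iff_isMulCommutative, ← commutator_eq_bot_iff_le_centralizer]
    exact hbot

theorem isCyclic_of_isCoatom_bot (h : IsCoatom (⊥ : Subgroup G)) : IsCyclic G := by
  obtain ⟨g, -, hg⟩ := SetLike.exists_of_lt (bot_lt_iff_ne_bot.mpr h.1.symm)
  exact isCyclic_iff_exists_zpowers_eq_top.mpr
    ⟨g, h.2 _ (bot_lt_iff_ne_bot.mpr (zpowers_ne_bot.mpr (by simpa using hg)))⟩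

end Solvable

section AbelianMaximal

variable {G : Type*} [Group G] {M : Subgroup G} [IsMulCommutative M]

theorem normalizer_eq_of_le (hM : IsCoatom M) (hcore : M.normalCore = ⊥) {H : Subgroup G}
    (hHM : H ≤ M) (hH : H ≠ ⊥) : normalizer (H : Set G) = M := by
  have hMH : M ≤ normalizer (H : Set G) :=
    ((le_centralizer_iff_isMulCommutative.mpr ‹_›).trans (centralizer_le hHM)).trans
      (centralizer_le_normalizer _)
  refine (hM.le_iff.mp hMH).resolve_left fun htop => hH ?_
  have : H.Normal := normalizer_eq_top_iff.mp htop
  exact le_bot_iff.mp (hcore ▸ normal_le_normalCore.mpr hHM)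

theorem mem_of_commute (hM : IsCoatom M) (hcore : M.normalCore = ⊥) {m g : G} (hm : m ∈ M)
    (hm1 : m ≠ 1) (hgm : Commute g m) : g ∈ M := by
  rw [← normalizer_eq_of_le hM hcore (zpowers_le.mpr hm) (zpowers_ne_bot.mpr hm1)]
  refine centralizer_le_normalizer _ (mem_centralizer_iff.mpr ?_)
  rintro _ ⟨k, rfl⟩
  exact (hgm.zpow_right k).eq.symm

variable [Finite G]

theorem exists_sylow_normalizer_eq {p : ℕ} [Fact p.Prime] (hM : IsCoatom M)
    (hcore : M.normalCore = ⊥) (hp : p ∣ Nat.card M) :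
    ∃ P : Sylow p G, (P : Subgroup G) ≤ M ∧ normalizer (P : Set G) = M := by
  obtain ⟨P₀⟩ : Nonempty (Sylow p M) := inferInstance
  have hP := P₀.isPGroup'.map M.subtype
  have hN := normalizer_eq_of_le hM hcore (map_subtype_le (P₀ : Subgroup M))
    ((map_eq_bot_iff_of_injective _ M.subtype_injective).not.mpr (P₀.ne_bot_of_dvd_card hp))
  obtain ⟨n, hn⟩ := hP.exists_card_eq
  -- Sylow's congruence `|N_G(P) : P| ≡ |G : P| [MOD p]`, where `N_G(P) = M`
  have hmod := Sylow.card_quotient_normalizer_modEq_card_quotient hn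
  rw [hN, comap_map_eq_self_of_injective M.subtype_injective] at hmod
  exact ⟨hP.toSylow ((hmod.dvd_iff dvd_rfl).not.mp P₀.not_dvd_index), map_subtype_le _, hN⟩

theorem exists_normal_not_dvd_card_commutator_le {p : ℕ} [Fact p.Prime] (hM : IsCoatom M)
    (hcore : M.normalCore = ⊥) (hp : p ∣ Nat.card M) :
    ∃ K : Subgroup G, K.Normal ∧ ¬ p ∣ Nat.card K ∧ commutator G ≤ K := by
  obtain ⟨P, hPM, hPN⟩ := exists_sylow_normalizer_eq hM hcore hp
  have hPc : normalizer (P : Set G) ≤ centralizer (P : Set G) :=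
    hPN ▸ le_centralizer_iff.mp (hPM.trans (le_centralizer_iff_isMulCommutative.mpr ‹_›))
  refine ⟨(MonoidHom.transferSylow P hPc).ker, inferInstance,
    MonoidHom.not_dvd_card_ker_transferSylow P hPc, ?_⟩
  rw [commutator_def, commutator_le]
  intro g₁ _ g₂ _
  rw [MonoidHom.mem_ker, map_commutatorElement, commutatorElement_eq_one_iff_commute]
  exact Subtype.ext (setLike_mul_comm (s := M) (hPM (MonoidHom.transferSylow P hPc g₁).2)
    (hPM (MonoidHom.transferSylow P hPc g₂).2))

theorem exists_normal_inf_eq_bot_commutator_le (hM : IsCoatom M) (hcore : M.normalCore = ⊥) :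
    ∃ K : Subgroup G, K.Normal ∧ K ⊓ M = ⊥ ∧ commutator G ≤ K := by
  have hK : ∀ p ∈ (Nat.card M).primeFactors,
      ∃ K : Subgroup G, K.Normal ∧ ¬ p ∣ Nat.card K ∧ commutator G ≤ K := fun p hp =>
    have : Fact p.Prime := ⟨Nat.prime_of_mem_primeFactors hp⟩
    exists_normal_not_dvd_card_commutator_le hM hcore (Nat.dvd_of_mem_primeFactors hp)
  choose! K hKn hKp hKc using hK
  refine ⟨⨅ p ∈ (Nat.card M).primeFactors, K p,
    normal_iInf_normal fun p => normal_iInf_normal fun hp => hKn p hp, ?_, le_iInf₂ hKc⟩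
  refine eq_bot_iff.mpr fun g hg => mem_bot.mpr ?_
  obtain ⟨hgK, hgM⟩ := mem_inf.mp hg
  simp only [mem_iInf] at hgK
  rw [← orderOf_eq_one_iff, Nat.eq_one_iff_not_exists_prime_dvd]
  intro q hq hqg
  have hqM : q ∈ (Nat.card M).primeFactors := Nat.mem_primeFactors.mpr
    ⟨hq, hqg.trans (orderOf_dvd_natCard M hgM), Nat.card_pos.ne'⟩
  exact hKp q hqM (hqg.trans (orderOf_dvd_natCard _ (hgK q hqM)))

theorem isMulCommutative_of_inf_eq_bot (hM : IsCoatom M) (hcore : M.normalCore = ⊥)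
    {K : Subgroup G} [K.Normal] (hKM : K ⊓ M = ⊥) {τ : G} (hτM : τ ∈ M) (hτ : orderOf τ = 2) :
    IsMulCommutative K := by
  let σ := MulAut.conjNormal (H := K) τ
  have hfree : MonoidHom.FixedPointFree σ := fun k hk => by
    have hkτ : Commute (k : G) τ := by
      have := congrArg Subtype.val hk
      rw [MulAut.conjNormal_apply] at this
      exact eq_mul_inv_iff_mul_eq.mp this.symm
    have hkM := mem_of_commute hM hcore hτM (by rintro rfl; simp at hτ) hkτ
    exact Subtype.ext (mem_bot.mp (hKM ▸ mem_inf.mpr ⟨k.2, hkM⟩))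
  have hinv : Function.Involutive σ := fun k => by
    rw [← MulAut.mul_apply, ← map_mul, ← pow_two, ← hτ, pow_orderOf_eq_one, map_one]
    rfl
  exact ⟨⟨hfree.commute_all_of_involutive hinv⟩⟩

theorem isSolvable_of_two_dvd_card (hM : IsCoatom M) (hcore : M.normalCore = ⊥)
    (h2 : 2 ∣ Nat.card M) : Group.IsSolvable G := by
  have : Fact (Nat.Prime 2) := ⟨Nat.prime_two⟩
  obtain ⟨τ, hτ⟩ := exists_prime_orderOf_dvd_card' 2 h2
  obtain ⟨K, hKn, hKM, hK⟩ := exists_normal_inf_eq_bot_commutator_le hM hcore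
  have := isMulCommutative_of_inf_eq_bot hM hcore hKM τ.2 (by rwa [orderOf_coe])
  refine ⟨⟨2, eq_bot_iff.mpr ?_⟩⟩
  rw [derivedSeries_succ, derivedSeries_one,
    ← commutator_eq_bot_iff_le_centralizer.mpr (le_centralizer K)]
  exact commutator_mono hK hK

end AbelianMaximal

section Action

open scoped Pointwise

variable {V : Type*} {Γ : SimpleGraph V} {G : Type*} [Group G] {φ : G →* (Γ ≃g Γ)}

theorem map_mul_apply (g h : G) (x : V) : φ (g * h) x = φ g (φ h x) := by
  rw [map_mul]
  rfl

theorem map_inv_apply_apply (g : G) (x : V) : φ g⁻¹ (φ g x) = x := by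
  rw [map_inv]
  exact RelIso.inv_apply_self _ _

theorem sym2_map_map_mul (g h : G) (e : Sym2 V) :
    Sym2.map (φ (g * h)) e = Sym2.map (φ g) (Sym2.map (φ h) e) := by
  rw [Sym2.map_map, map_mul]
  rfl

theorem mem_eStab_mk_iff {g : G} {u v : V} :
    g ∈ eStab Γ φ s(u, v) ↔ (φ g u = u ∧ φ g v = v) ∨ (φ g u = v ∧ φ g v = u) := by
  change Sym2.map (φ g) s(u, v) = s(u, v) ↔ _
  rw [Sym2.map_mk, Sym2.eq_iff]

theorem conj_mem_vStab_iff {g h : G} {x : V} :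
    g * h * g⁻¹ ∈ vStab Γ φ (φ g x) ↔ h ∈ vStab Γ φ x := by
  change φ (g * h * g⁻¹) (φ g x) = φ g x ↔ φ h x = x
  simp

theorem exists_apply_eq_of_adj (ht : IsEdgeTransitive Γ φ) {u v x y : V} (huv : Γ.Adj u v)
    (hxy : Γ.Adj x y) : ∃ g, (φ g u = x ∧ φ g v = y) ∨ (φ g u = y ∧ φ g v = x) := by
  simpa [Sym2.eq_iff] using ht.2 s(u, v) huv s(x, y) hxy

theorem isEdgeTransitive_comp_subtype (ht : IsEdgeTransitive Γ φ) {N : Subgroup G} [N.Normal]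
    {e : Sym2 V} (he : e ∈ Γ.edgeSet) (hN : N ⊔ eStab Γ φ e = ⊤) :
    IsEdgeTransitive Γ (φ.comp N.subtype) := by
  have horbit : ∀ e' ∈ Γ.edgeSet, ∃ n : N, Sym2.map (φ n) e = e' := by
    intro e' he'
    obtain ⟨g, rfl⟩ := ht.2 e he e' he'
    obtain ⟨n, hn, m, hm, rfl⟩ : g ∈ (N : Set G) * (eStab Γ φ e : Set G) := by
      rw [← normal_mul, hN]
      trivial
    exact ⟨⟨n, hn⟩, by rw [sym2_map_map_mul, show Sym2.map (φ m) e = e from hm]⟩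
  refine ⟨ht.1, fun e₁ h₁ e₂ h₂ => ?_⟩
  obtain ⟨n₁, rfl⟩ := horbit e₁ h₁
  obtain ⟨n₂, rfl⟩ := horbit e₂ h₂
  exact ⟨n₂ * n₁⁻¹, by simp [Sym2.map_map, Function.comp_def]⟩

theorem vStab_ne_top (ht : IsEdgeTransitive Γ φ) {x y z : V} (hxy : Γ.Adj x y)
    (hyz : Γ.Adj y z) (hzx : z ≠ x) : vStab Γ φ x ≠ ⊤ := by
  intro htop
  obtain ⟨g, ⟨hg, -⟩ | ⟨hg, -⟩⟩ := exists_apply_eq_of_adj ht hxy hyz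
  all_goals have hgx : φ g x = x := (htop ▸ mem_top g : g ∈ vStab Γ φ x)
  · exact hxy.ne (hgx.symm.trans hg)
  · exact hzx (hg.symm.trans hgx)

theorem apply_ne_of_adj (ht : IsEdgeTransitive Γ φ) {u v : V} (huv : Γ.Adj u v)
    (hsep : ∀ g, φ g u ≠ v) {x y : V} (hxy : Γ.Adj x y) (g : G) : φ g x ≠ y := by
  intro h
  obtain ⟨m, ⟨rfl, rfl⟩ | ⟨rfl, rfl⟩⟩ := exists_apply_eq_of_adj ht huv hxy
  · exact hsep (m⁻¹ * g * m) (by rw [map_mul_apply, map_mul_apply, h, map_inv_apply_apply])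
  · have : φ (m⁻¹ * g * m) v = u := by
      rw [map_mul_apply, map_mul_apply, h, map_inv_apply_apply]
    exact hsep (m⁻¹ * g * m)⁻¹ (by rw [← this, map_inv_apply_apply])

theorem exists_apply_eq_of_adj_of_adj (ht : IsEdgeTransitive Γ φ) {u v : V} (huv : Γ.Adj u v)
    (hsep : ∀ g, φ g u ≠ v) {a w b : V} (haw : Γ.Adj a w) (hab : Γ.Adj a b) :
    ∃ g, φ g w = b := by
  obtain ⟨g, ⟨-, hg⟩ | ⟨hg, -⟩⟩ := exists_apply_eq_of_adj ht haw hab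
  · exact ⟨g, hg⟩
  · exact absurd hg (apply_ne_of_adj ht huv hsep hab g)

theorem two_dvd_orderOf_of_swap {t : G} {u v : V} (huv : u ≠ v) (htu : φ t u = v)
    (htv : φ t v = u) : 2 ∣ orderOf t := by
  have hsq : ∀ k : ℕ, φ (t ^ (2 * k)) u = u := by
    intro k
    induction k with
    | zero => simp
    | succ k ih => rw [mul_add, pow_add, map_mul_apply, pow_two, map_mul_apply, htu, htv, ih]
  by_contra hodd
  obtain ⟨k, hk⟩ := Nat.odd_iff.mpr (Nat.two_dvd_ne_zero.mp hodd)
  have hinv : t ^ (2 * k) = t⁻¹ := eq_inv_of_mul_eq_one_left (by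
    rw [← pow_succ, ← hk, pow_orderOf_eq_one])
  have hback : φ t (φ t⁻¹ u) = φ t u := by rw [← hinv, hsq k]
  exact huv (by simpa [htu] using hback)

theorem exists_swap_of_normalizer_eStab_eq [Fintype V] [DecidableRel Γ.Adj]
    (ht : IsEdgeTransitive Γ φ) (hdeg : ∀ v, 1 < Γ.degree v) {u v : V} (huv : Γ.Adj u v)
    (hM : IsCoatom (eStab Γ φ s(u, v)))
    (hN : normalizer (eStab Γ φ s(u, v) : Set G) = eStab Γ φ s(u, v)) :
    ∃ t ∈ eStab Γ φ s(u, v), φ t u = v ∧ φ t v = u := by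
  by_contra! hswap
  have hfix : ∀ t ∈ eStab Γ φ s(u, v), φ t u = u ∧ φ t v = v := fun t ht =>
    (mem_eStab_mk_iff.mp ht).resolve_right fun h => hswap t ht h.1 h.2
  -- hence `G_{{u,v}} = G_u = G_v`, and an element taking `{u, v}` to `{v, w}` either fixes `u`
  -- or normalizes `G_{{u,v}}`
  obtain ⟨w, hvw, hwu⟩ := exists_adj_ne (hdeg v) u
  obtain ⟨w', huw', hw'v⟩ := exists_adj_ne (hdeg u) v
  have hMu : vStab Γ φ u = eStab Γ φ s(u, v) :=
    (hM.le_iff.mp fun t ht => (hfix t ht).1).resolve_left (vStab_ne_top ht huv hvw hwu)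
  have hMv : vStab Γ φ v = eStab Γ φ s(u, v) :=
    (hM.le_iff.mp fun t ht => (hfix t ht).2).resolve_left (vStab_ne_top ht huv.symm huw' hw'v)
  obtain ⟨g, ⟨hgu, -⟩ | ⟨hgu, hgv⟩⟩ := exists_apply_eq_of_adj ht huv hvw
  · have hgN : g ∈ normalizer (eStab Γ φ s(u, v) : Set G) := by
      refine mem_normalizer_iff.mpr fun h => ?_
      rw [← hMu, ← conj_mem_vStab_iff (g := g), hgu, hMv, hMu]
    rw [hN, ← hMu] at hgN
    exact huv.ne (hgN.symm.trans hgu)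
  · have hgM : g ∈ vStab Γ φ u := hMu ▸ hMv ▸ hgv
    exact hwu (hgu.symm.trans hgM)

end Action

section Commutative

variable {V : Type*} {Γ : SimpleGraph V} {N : Type*} [Group N] [IsMulCommutative N]
  {ψ : N →* (Γ ≃g Γ)}

theorem map_apply_comm (n m : N) (x : V) : ψ n (ψ m x) = ψ m (ψ n x) := by
  rw [← map_mul_apply, mul_comm' n m, map_mul_apply]

theorem degree_le_two_of_apply_eq [Fintype V] [DecidableRel Γ.Adj] (ht : IsEdgeTransitive Γ ψ)
    {u v : V} (huv : Γ.Adj u v) {n₀ : N} (hn₀ : ψ n₀ u = v) : Γ.degree u ≤ 2 := by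
  classical
  have hnbr : ∀ w, Γ.Adj u w → w ≠ v → ∃ n, ψ n v = u ∧ ψ n u = w := by
    intro w huw hwv
    obtain ⟨n, ⟨hnu, hnv⟩ | ⟨hnu, hnv⟩⟩ := exists_apply_eq_of_adj ht huv huw
    · exact absurd (by rw [← hnv, ← hn₀, map_apply_comm, hnu]) hwv
    · exact ⟨n, hnv, hnu⟩
  have hu : u = ψ n₀⁻¹ v := by rw [← hn₀, map_inv_apply_apply]
  have hcard : ((Γ.neighborFinset u).erase v).card ≤ 1 := by
    refine Finset.card_le_one.mpr fun w hw w' hw' => ?_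
    rw [Finset.mem_erase, mem_neighborFinset] at hw hw'
    obtain ⟨n, hnv, rfl⟩ := hnbr w hw.2 hw.1
    obtain ⟨n', hn'v, rfl⟩ := hnbr w' hw'.2 hw'.1
    rw [hu, map_apply_comm n, map_apply_comm n', hnv, hn'v]
  have := Finset.pred_card_le_card_erase (s := Γ.neighborFinset u) (a := v)
  rw [card_neighborFinset_eq_degree] at this
  omega

theorem neighborSet_eq_of_adj_of_adj (ht : IsEdgeTransitive Γ ψ) {u v : V} (huv : Γ.Adj u v)
    (hsep : ∀ n, ψ n u ≠ v) {a a' w : V} (haw : Γ.Adj a w) (ha'w : Γ.Adj a' w) :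
    Γ.neighborSet a = Γ.neighborSet a' := by
  suffices ∀ ⦃a a'⦄, Γ.Adj a w → Γ.Adj a' w → ∀ b, Γ.Adj a b → Γ.Adj a' b from
    Set.ext fun b => ⟨this haw ha'w b, this ha'w haw b⟩
  intro a a' haw ha'w b hab
  obtain ⟨n, ⟨hna, hnw⟩ | ⟨hna, -⟩⟩ := exists_apply_eq_of_adj ht haw ha'w
  · obtain ⟨m, rfl⟩ := exists_apply_eq_of_adj_of_adj ht huv hsep haw hab
    have hfix : ψ n (ψ m w) = ψ m w := by rw [map_apply_comm, hnw]
    rw [← hna, ← hfix]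
    exact (ψ n).map_adj_iff.mpr hab
  · exact absurd hna (apply_ne_of_adj ht huv hsep haw n)

theorem nonempty_iso_completeBipartiteGraph [Fintype V] [DecidableRel Γ.Adj] {d : ℕ}
    (ht : IsEdgeTransitive Γ ψ) (hconn : Γ.Connected) (hreg : Γ.IsRegularOfDegree d)
    (hd : 3 ≤ d) : Nonempty (Γ ≃g completeBipartiteGraph (Fin d) (Fin d)) := by
  obtain ⟨e, he⟩ := ht.1
  induction e using Sym2.ind with | _ u v =>
  by_cases hswap : ∃ n, ψ n u = v
  · obtain ⟨n₀, hn₀⟩ := hswap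
    have := degree_le_two_of_apply_eq ht he hn₀
    rw [hreg u] at this
    omega
  · exact nonempty_iso_completeBipartiteGraph_of_neighborSet_eq hconn hreg (by omega)
      fun _ _ _ haw ha'w =>
        neighborSet_eq_of_adj_of_adj ht he (fun n hn => hswap ⟨n, hn⟩) haw ha'w

end Commutative

section EdgePrimitive

variable {V : Type*} [Fintype V] {Γ : SimpleGraph V} [DecidableRel Γ.Adj] {G : Type*} [Group G]
  {φ : G →* (Γ ≃g Γ)} {d : ℕ}

theorem normalCore_eStab_eq_bot (ht : IsEdgeTransitive Γ φ) (hφ : Function.Injective φ)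
    (hdeg : ∀ v, 1 < Γ.degree v) {e : Sym2 V} (he : e ∈ Γ.edgeSet) :
    (eStab Γ φ e).normalCore = ⊥ := by
  refine eq_bot_iff.mpr fun g hg => mem_bot.mpr (hφ ?_)
  rw [map_one]
  refine eq_one_of_forall_sym2_map_eq hdeg fun x y hxy => ?_
  obtain ⟨k, hk⟩ := ht.2 e he s(x, y) hxy
  have hfix : Sym2.map (φ (k⁻¹ * g * k⁻¹⁻¹)) e = e := hg k⁻¹
  rw [← hk, ← sym2_map_map_mul, show g * k = k * (k⁻¹ * g * k⁻¹⁻¹) by group, sym2_map_map_mul,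
    hfix]

theorem normal_eq_bot_of_isMulCommutative (hprim : IsEdgePrimitive Γ φ)
    (hφ : Function.Injective φ) (hconn : Γ.Connected) (hreg : Γ.IsRegularOfDegree d)
    (hd : 3 ≤ d) (hnotbip : ¬ Nonempty (Γ ≃g completeBipartiteGraph (Fin d) (Fin d)))
    (N : Subgroup G) [N.Normal] [IsMulCommutative N] : N = ⊥ := by
  by_contra hN
  obtain ⟨e, he⟩ := hprim.1.1
  have hcore := normalCore_eStab_eq_bot hprim.1 hφ (fun v => by rw [hreg v]; omega) he
  have hsup : N ⊔ eStab Γ φ e = ⊤ := (hprim.2 e he).2 _ <| right_lt_sup.mpr fun hle =>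
    hN (le_bot_iff.mp (hcore ▸ normal_le_normalCore.mpr hle))
  exact hnotbip (nonempty_iso_completeBipartiteGraph
    (isEdgeTransitive_comp_subtype hprim.1 he hsup) hconn hreg hd)

theorem not_isSolvable (hprim : IsEdgePrimitive Γ φ) (hφ : Function.Injective φ)
    (hconn : Γ.Connected) (hreg : Γ.IsRegularOfDegree d) (hd : 3 ≤ d)
    (hnotbip : ¬ Nonempty (Γ ≃g completeBipartiteGraph (Fin d) (Fin d))) :
    ¬ Group.IsSolvable G := by
  intro hsol
  have := subsingleton_of_isSolvable fun N _ _ =>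
    normal_eq_bot_of_isMulCommutative hprim hφ hconn hreg hd hnotbip N
  obtain ⟨e, he⟩ := hprim.1.1
  exact (hprim.2 e he).1 (Subsingleton.elim _ _)

theorem not_isMulCommutative_eStab (hprim : IsEdgePrimitive Γ φ) (hφ : Function.Injective φ)
    (hconn : Γ.Connected) (hreg : Γ.IsRegularOfDegree d) (hd : 3 ≤ d)
    (hnotbip : ¬ Nonempty (Γ ≃g completeBipartiteGraph (Fin d) (Fin d))) {e : Sym2 V}
    (he : e ∈ Γ.edgeSet) : ¬ IsMulCommutative (eStab Γ φ e) := by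
  intro hcomm
  have : Finite G := Finite.of_injective (fun g => ⇑(φ g)) fun g h hgh =>
    hφ (RelIso.ext (congrFun hgh))
  have hns := not_isSolvable hprim hφ hconn hreg hd hnotbip
  have hdeg : ∀ v, 1 < Γ.degree v := fun v => by rw [hreg v]; omega
  have hM := hprim.2 e he
  have hcore := normalCore_eStab_eq_bot hprim.1 hφ hdeg he
  have hMne : eStab Γ φ e ≠ ⊥ := fun hbot => hns <| by
    have := isCyclic_of_isCoatom_bot (hbot ▸ hM)
    infer_instance
  induction e using Sym2.ind with | _ u v =>
  obtain ⟨t, htM, htu, htv⟩ := exists_swap_of_normalizer_eStab_eq hprim.1 hdeg he hM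
    (normalizer_eq_of_le hM hcore le_rfl hMne)
  exact hns (isSolvable_of_two_dvd_card hM hcore
    ((two_dvd_orderOf_of_swap he.ne htu htv).trans (orderOf_dvd_natCard _ htM)))

end EdgePrimitive

end EdgePrimitivePaper

open EdgePrimitivePaper in
/-- If `Γ` is `G`-edge-primitive and `Γ ≇ K_{d,d}`, then `G` is
insoluble and every edge stabilizer `G_{{u,v}}` is nonabelian. -/
theorem stmt_9 {V : Type*} [Fintype V] (Γ : SimpleGraph V) [DecidableRel Γ.Adj]
    (d : ℕ) (hd : 3 ≤ d) (hconn : Γ.Connected) (hreg : Γ.IsRegularOfDegree d)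
    (A : Subgroup (Γ ≃g Γ))
    (hprim : IsEdgePrimitive Γ A.subtype)
    (hnotbip : ¬ Nonempty (Γ ≃g completeBipartiteGraph (Fin d) (Fin d))) :
    ¬ IsSolvable A ∧
      ∀ e ∈ Γ.edgeSet, ¬ (∀ x y : ↥(eStab Γ A.subtype e), x * y = y * x) :=
  ⟨not_isSolvable hprim A.subtype_injective hconn hreg hd hnotbip, fun _ he hcomm =>
    not_isMulCommutative_eStab hprim A.subtype_injective hconn hreg hd hnotbip he
      (isMulCommutative_iff.mpr hcomm)⟩
end

section
/- Let G be a finite primitive permutation group on a finite set Ω, let N be a nontrivial normal subgroup of G, and let α ∈ Ω. Then either N acts regularly on Ω, or the point stabilizer N_α is self-normalized in N (that is, the normalizer of N_α in N equals N_α). -/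
open SimpleGraph

/-! `G_α` normalizes `N_α = N ⊓ G_α`, so by maximality of `G_α` the normalizer of `N_α` in `G`
is either `G_α` (whence `N_α` is self-normalized in `N`) or all of `G`. In the second case `N_α`
is a normal subgroup fixing a point, hence fixing every point by transitivity, hence trivial by
faithfulness; then every `N_β`, being conjugate to `N_α`, is trivial as well, and `N` is
transitive because a normal subgroup of a primitive group either acts trivially or transitively. -/

namespace MulAction

variable {G Ω : Type*} [Group G] [MulAction G Ω]

theorem nontrivial_of_isCoatom_stabilizer {α : Ω} (h : IsCoatom (stabilizer G α)) :
    Nontrivial Ω := by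
  refine (subsingleton_or_nontrivial Ω).resolve_left fun _ ↦ h.1 ?_
  ext g
  simp [mem_stabilizer_iff, Subsingleton.elim (g • α) α]

theorem isPreprimitive_of_isCoatom_stabilizer [IsPretransitive G Ω] {α : Ω}
    (h : IsCoatom (stabilizer G α)) : IsPreprimitive G Ω :=
  have := nontrivial_of_isCoatom_stabilizer h
  (isCoatom_stabilizer_iff_preprimitive G α).mp h

theorem eq_bot_of_fixedPoints_eq_univ [FaithfulSMul G Ω] {K : Subgroup G}
    (h : fixedPoints K Ω = .univ) : K = ⊥ := by
  refine (Subgroup.eq_bot_iff_forall K).mpr fun k hk ↦ eq_of_smul_eq_smul (α := Ω) fun β ↦ ?_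
  simpa using (Set.eq_univ_iff_forall.mp h β) ⟨k, hk⟩

theorem inf_stabilizer_smul_eq_map_conj (N : Subgroup G) [N.Normal] (g : G) (α : Ω) :
    N ⊓ stabilizer G (g • α) = (N ⊓ stabilizer G α).map (MulAut.conj g).toMonoidHom := by
  rw [Subgroup.map_inf_eq _ _ _ (MulAut.conj g).injective, stabilizer_smul_eq_stabilizer_map_conj]
  congr
  exact (Subgroup.Normal.map_conj_eq N g).symm

theorem fixedPoints_eq_univ_of_normal_le_stabilizer [IsPretransitive G Ω] {K : Subgroup G}
    [K.Normal] {α : Ω} (h : K ≤ stabilizer G α) : fixedPoints K Ω = .univ := by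
  refine Set.eq_univ_of_forall fun β k ↦ ?_
  obtain ⟨g, rfl⟩ := exists_smul_eq G α β
  have hle : K ≤ stabilizer G (g • α) := by
    rw [← inf_eq_left, inf_stabilizer_smul_eq_map_conj, inf_eq_left.mpr h]
    exact Subgroup.Normal.map_conj_eq K g
  exact hle k.2

theorem eq_bot_of_normal_le_stabilizer [FaithfulSMul G Ω] [IsPretransitive G Ω]
    {K : Subgroup G} [K.Normal] {α : Ω} (h : K ≤ stabilizer G α) : K = ⊥ :=
  eq_bot_of_fixedPoints_eq_univ (fixedPoints_eq_univ_of_normal_le_stabilizer h)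

theorem stabilizer_le_normalizer_inf_stabilizer (N : Subgroup G) [N.Normal] (α : Ω) :
    stabilizer G α ≤ Subgroup.normalizer ((N ⊓ stabilizer G α : Subgroup G) : Set G) :=
  (le_inf Subgroup.le_normalizer_of_normal Subgroup.le_normalizer).trans
    Subgroup.inf_normalizer_le_normalizer_inf

theorem normalizer_inf_stabilizer_eq_stabilizer [FaithfulSMul G Ω] [IsPretransitive G Ω]
    {α : Ω} (hprim : IsCoatom (stabilizer G α)) {N : Subgroup G} [N.Normal]
    (hNα : N ⊓ stabilizer G α ≠ ⊥) :
    Subgroup.normalizer ((N ⊓ stabilizer G α : Subgroup G) : Set G) = stabilizer G α := by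
  refine ((stabilizer_le_normalizer_inf_stabilizer N α).eq_or_lt.resolve_right
    fun hlt ↦ hNα ?_).symm
  have : (N ⊓ stabilizer G α).Normal := Subgroup.normalizer_eq_top_iff.mp (hprim.2 _ hlt)
  exact eq_bot_of_normal_le_stabilizer inf_le_right

variable (Ω) in
theorem isPretransitive_of_normal_of_ne_bot [FaithfulSMul G Ω] [IsPreprimitive G Ω]
    {N : Subgroup G} [N.Normal] (hN : N ≠ ⊥) : IsPretransitive N Ω :=
  IsQuasiPreprimitive.isPretransitive_of_normal fun h ↦ hN (eq_bot_of_fixedPoints_eq_univ h)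

end MulAction

open MulAction

open EdgePrimitivePaper in
theorem stmt_11_general {G : Type*} [Group G] {Ω : Type*}
    [MulAction G Ω] [FaithfulSMul G Ω]
    (htrans : MulAction.IsPretransitive G Ω)
    (hprim : ∀ β : Ω, IsCoatom (MulAction.stabilizer G β))
    (N : Subgroup G) (hN : N.Normal) (hNbot : N ≠ ⊥) (α : Ω) :
    ((∀ β γ : Ω, ∃ n ∈ N, n • β = γ) ∧ ∀ β : Ω, N ⊓ MulAction.stabilizer G β = ⊥) ∨
      N ⊓ Subgroup.normalizer ((N ⊓ MulAction.stabilizer G α : Subgroup G) : Set G) = N ⊓ MulAction.stabilizer G α := by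
  by_cases hNα : N ⊓ stabilizer G α = ⊥
  · have := isPreprimitive_of_isCoatom_stabilizer (hprim α)
    have := isPretransitive_of_normal_of_ne_bot Ω hNbot
    refine .inl ⟨fun β γ ↦ ?_, fun β ↦ ?_⟩
    · obtain ⟨n, rfl⟩ := exists_smul_eq N β γ
      exact ⟨n, n.2, rfl⟩
    · obtain ⟨g, rfl⟩ := exists_smul_eq G α β
      rw [inf_stabilizer_smul_eq_map_conj, hNα, Subgroup.map_bot]
  · right
    rw [normalizer_inf_stabilizer_eq_stabilizer (hprim α) hNα]

open EdgePrimitivePaper in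
/-- **Lemma 2.1, first part.** In a finite primitive permutation group `G`
on `Ω`, a nontrivial normal subgroup `N` is either regular, or its point stabilizer
`N_α` is self-normalized in `N`. -/
theorem stmt_11 {G : Type*} [Group G] [Finite G] {Ω : Type*} [Finite Ω]
    [MulAction G Ω] [FaithfulSMul G Ω]
    (htrans : MulAction.IsPretransitive G Ω)
    (hprim : ∀ β : Ω, IsCoatom (MulAction.stabilizer G β))
    (N : Subgroup G) (hN : N.Normal) (hNbot : N ≠ ⊥) (α : Ω) :
    ((∀ β γ : Ω, ∃ n ∈ N, n • β = γ) ∧ ∀ β : Ω, N ⊓ MulAction.stabilizer G β = ⊥) ∨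
      N ⊓ Subgroup.normalizer ((N ⊓ MulAction.stabilizer G α : Subgroup G) : Set G) = N ⊓ MulAction.stabilizer G α :=
  stmt_11_general htrans hprim N hN hNbot α
end

section
/- Let G be a finite transitive permutation group on a finite set Ω and suppose G has a transitive minimal normal subgroup N which is the internal direct product N = T_1 × ⋯ × T_k of nonabelian simple subgroups T_1, …, T_k. Then for each α ∈ Ω, the point stabilizer G_α acts transitively by conjugation on the set {(T_1)_α, …, (T_k)_α}; that is, for all i and j there exists g ∈ G_α with ((T_i)_α)^g = (T_j)_α. -/
open SimpleGraph

/-!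
Since the factors `T_i` commute pairwise, `N` normalizes each of them, and, being normal in `G`,
also each conjugate `T_i^g`. If `T_i^g` met every `T_j` trivially it would commute with every
`T_j`, hence centralize `N ≥ T_i^g`, contradicting that `T_i` is nonabelian. So some
`T_i^g ∩ T_j` is nontrivial and normalized by `T_j`, and simplicity gives `T_j ≤ T_i^g`;
the same argument for `g⁻¹` gives equality. Thus `G` permutes the factors, and the join of one
orbit is a nontrivial normal subgroup of `N`, hence `N` itself, so by independence the orbit
contains every factor. Finally, a Frattini argument with the transitive subgroup `N`, which
normalizes every `T_i`, moves the conjugating element into `G_α`.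
-/

open Pointwise

namespace Subgroup

variable {G : Type*} [Group G]

theorem le_of_le_normalizer_of_inf_ne_bot {S K : Subgroup G} [IsSimpleGroup S]
    (hS : S ≤ normalizer K) (hKS : K ⊓ S ≠ ⊥) : S ≤ K := by
  have : (K.subgroupOf S).Normal := normal_subgroupOf_iff_le_normalizer_inf.mpr
    ((le_inf hS le_normalizer).trans inf_normalizer_le_normalizer_inf)
  rcases IsSimpleGroup.eq_bot_or_eq_top_of_normal _ this with h | h
  · exact absurd (subgroupOf_eq_bot.mp h).eq_bot hKS
  · exact subgroupOf_eq_top.mp h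

theorem commute_of_le_normalizer_of_inf_eq_bot {H K : Subgroup G} (hHK : H ≤ normalizer K)
    (hKH : K ≤ normalizer H) (hHK' : H ⊓ K = ⊥) {x y : G} (hx : x ∈ H) (hy : y ∈ K) :
    Commute x y := by
  rw [← commutatorElement_eq_one_iff_commute, ← mem_bot, ← hHK', commutatorElement_def]
  refine ⟨?_, mul_mem (le_normalizer_iff.mp hHK x hx y hy) (K.inv_mem hy)⟩
  rw [mul_assoc, mul_assoc, ← mul_assoc y]
  exact mul_mem hx (le_normalizer_iff.mp hKH y hy x⁻¹ (H.inv_mem hx))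

theorem smul_normalizer (g : ConjAct G) (H : Subgroup G) :
    g • normalizer H = normalizer ((g • H : Subgroup G) : Set G) :=
  map_equiv_normalizer_eq H (MulDistribMulAction.toMulEquiv G g)

theorem Normal.le_normalizer_smul {N H : Subgroup G} (hN : N.Normal)
    (hNH : N ≤ normalizer (H : Set G)) (g : ConjAct G) :
    N ≤ normalizer ((g • H : Subgroup G) : Set G) := by
  rw [← smul_normalizer, ← hN.conjAct g]
  exact pointwise_smul_le_pointwise_smul_iff.mpr hNH

variable {ι : Type*} {T : ι → Subgroup G}

theorem iSup_le_normalizer_of_commute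
    (hcomm : ∀ i j, i ≠ j → ∀ x ∈ T i, ∀ y ∈ T j, Commute x y) (i : ι) :
    (⨆ j, T j) ≤ normalizer (T i) := by
  refine iSup_le fun j => ?_
  rcases eq_or_ne j i with rfl | hji
  · exact le_normalizer
  · exact le_normalizer_iff.mpr fun x hx y hy => by
      rw [(hcomm j i hji x hx y hy).eq, mul_inv_cancel_right]
      exact hy

theorem le_centralizer_iSup_of_inf_eq_bot {K : Subgroup G}
    (hKT : ∀ j, K ≤ normalizer (T j)) (hTK : (⨆ j, T j) ≤ normalizer K)
    (hinf : ∀ j, K ⊓ T j = ⊥) : K ≤ centralizer (⨆ j, T j : Subgroup G) :=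
  le_centralizer_iff.mpr <| iSup_le fun j _ hy => mem_centralizer_iff.mpr fun _ hx =>
    commute_of_le_normalizer_of_inf_eq_bot (hKT j) ((le_iSup T j).trans hTK) (hinf j) hx hy

theorem exists_smul_eq_of_commute
    (hcomm : ∀ i j, i ≠ j → ∀ x ∈ T i, ∀ y ∈ T j, Commute x y)
    (hnormal : (⨆ j, T j).Normal) (hsimple : ∀ i, IsSimpleGroup (T i))
    (hnc : ∀ i, ¬ IsMulCommutative (T i))
    (g : ConjAct G) (i : ι) : ∃ j, g • T i = T j := by
  set N := ⨆ j, T j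
  have smul_le : g • T i ≤ N :=
    (pointwise_smul_le_pointwise_smul_iff.mpr (le_iSup T i)).trans (hnormal.conjAct g).le
  have le_normalizer_smul (g : ConjAct G) (i : ι) :
      N ≤ normalizer ((g • T i : Subgroup G) : Set G) :=
    hnormal.le_normalizer_smul (iSup_le_normalizer_of_commute hcomm i) g
  have le_smul_of_inf_ne_bot (g : ConjAct G) (i j : ι) (h : g • T i ⊓ T j ≠ ⊥) :
      T j ≤ g • T i :=
    have := hsimple j
    le_of_le_normalizer_of_inf_ne_bot ((le_iSup T j).trans (le_normalizer_smul g i)) h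
  obtain ⟨j, hj⟩ : ∃ j, g • T i ⊓ T j ≠ ⊥ := by
    by_contra! h
    have hcent := le_centralizer_iSup_of_inf_eq_bot
      (fun j => smul_le.trans (iSup_le_normalizer_of_commute hcomm j)) (le_normalizer_smul g i) h
    have := hnormal
    refine hnc i (le_centralizer_iff_isMulCommutative.mp ?_)
    calc T i ≤ g⁻¹ • centralizer (N : Set G) := pointwise_smul_subset_iff.mp hcent
      _ = centralizer (N : Set G) := normal_centralizer.conjAct _
      _ ≤ centralizer (T i : Set G) := centralizer_le (le_iSup T i)
  have hne : g⁻¹ • T j ≠ ⊥ := fun h =>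
    (nontrivial_iff_ne_bot (T j)).mp (hsimple j).toNontrivial
      (by rw [← smul_inv_smul g (T j), h, smul_bot])
  have hTi := le_smul_of_inf_ne_bot g⁻¹ j i
    (by rwa [inf_eq_left.mpr (subset_pointwise_smul_iff.mp (le_smul_of_inf_ne_bot g i j hj))])
  exact ⟨j, le_antisymm (pointwise_smul_subset_iff.mpr hTi) (le_smul_of_inf_ne_bot g i j hj)⟩

theorem exists_smul_eq_of_isMinimalNormal
    (hmin : EdgePrimitivePaper.IsMinimalNormal (⨆ j, T j))
    (hind : ∀ i, T i ⊓ (⨆ j ∈ ({i}ᶜ : Set ι), T j) = ⊥) (hne : ∀ i, T i ≠ ⊥)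
    (hperm : ∀ (g : ConjAct G) i, ∃ j, g • T i = T j) (i j : ι) :
    ∃ g : ConjAct G, g • T i = T j := by
  set O := {l | ∃ g : ConjAct G, g • T i = T l}
  set M := ⨆ l ∈ O, T l
  have smul_le : ∀ g : ConjAct G, g • M ≤ M := fun g =>
    pointwise_smul_subset_iff.mpr <| iSup₂_le fun l ⟨h, hl⟩ => by
      obtain ⟨m, hm⟩ := hperm g l
      refine subset_pointwise_smul_iff.mpr ?_
      rw [inv_inv, hm]
      exact le_iSup₂ (f := fun l (_ : l ∈ O) => T l) m ⟨g * h, by rw [mul_smul, hl, hm]⟩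
  have hM : M.Normal := ⟨fun n hn g => by
    simpa only [ConjAct.toConjAct_smul] using
      smul_le _ (smul_mem_pointwise_smul n (ConjAct.toConjAct g) M hn)⟩
  have hMN : M = ⨆ l, T l := hmin.2.2 M hM
    (ne_bot_of_le_ne_bot (hne i)
      (le_iSup₂ (f := fun l (_ : l ∈ O) => T l) i ⟨1, one_smul _ _⟩))
    (iSup₂_le fun l _ => le_iSup T l)
  by_contra hj
  have hM_le : M ≤ ⨆ l ∈ ({j}ᶜ : Set ι), T l := biSup_mono fun l hl hlj => hj (hlj ▸ hl)
  exact hne j ((inf_eq_left.mpr ((le_iSup T j).trans (hMN ▸ hM_le))).symm.trans (hind j))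

theorem exists_mem_stabilizer_smul_inf_eq {Ω : Type*} [MulAction G Ω] {N H K : Subgroup G}
    (hN : ∀ β γ : Ω, ∃ n ∈ N, n • β = γ) (hNH : N ≤ normalizer (H : Set G))
    {g : ConjAct G} (hg : g • K = H) (α : Ω) :
    ∃ c ∈ MulAction.stabilizer G α, ConjAct.toConjAct c • (K ⊓ MulAction.stabilizer G α) =
      H ⊓ MulAction.stabilizer G α := by
  obtain ⟨n, hn, hnα⟩ := hN (ConjAct.ofConjAct g • α) α
  have hc : n * ConjAct.ofConjAct g ∈ MulAction.stabilizer G α := by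
    rwa [MulAction.mem_stabilizer_iff, mul_smul]
  refine ⟨_, hc, ?_⟩
  rw [smul_inf, conjAct_pointwise_smul_eq_self (le_normalizer hc), map_mul, mul_smul,
    ConjAct.toConjAct_ofConjAct, hg, conjAct_pointwise_smul_eq_self (hNH hn)]

end Subgroup

open EdgePrimitivePaper in
theorem stmt_14_general {G : Type*} [Group G] {Ω : Type*}
    [MulAction G Ω]
    (N : Subgroup G) (hmin : IsMinimalNormal N)
    (hNtrans : ∀ β γ : Ω, ∃ n ∈ N, n • β = γ)
    (k : ℕ) (T : Fin k → Subgroup G)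
    (hTsimple : ∀ i, IsSimpleGroup (T i) ∧ ¬ (∀ x y : ↥(T i), x * y = y * x))
    (hTcomm : ∀ i j, i ≠ j → ∀ x ∈ T i, ∀ y ∈ T j, x * y = y * x)
    (hTsup : (⨆ i, T i) = N)
    (hTind : ∀ i, T i ⊓ (⨆ j ∈ ({i}ᶜ : Set (Fin k)), T j) = ⊥)
    (α : Ω) :
    ∀ i j, ∃ g ∈ MulAction.stabilizer G α, ∀ x : G,
      g * x * g⁻¹ ∈ T i ⊓ MulAction.stabilizer G α ↔
        x ∈ T j ⊓ MulAction.stabilizer G α := by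
  subst hTsup
  intro i j
  have hperm := Subgroup.exists_smul_eq_of_commute hTcomm hmin.1 (fun l => (hTsimple l).1)
    fun l h => (hTsimple l).2 h.is_comm.comm
  have hne l : T l ≠ ⊥ := (Subgroup.nontrivial_iff_ne_bot _).mp (hTsimple l).1.toNontrivial
  obtain ⟨g, hg⟩ := Subgroup.exists_smul_eq_of_isMinimalNormal hmin hTind hne hperm j i
  obtain ⟨c, hc, hcT⟩ := Subgroup.exists_mem_stabilizer_smul_inf_eq hNtrans
    (Subgroup.iSup_le_normalizer_of_commute hTcomm i) hg α
  refine ⟨c, hc, fun x => ?_⟩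
  rw [← hcT, ← ConjAct.toConjAct_smul, Subgroup.smul_mem_pointwise_smul_iff]

open EdgePrimitivePaper in
/-- **Lemma 2.4.** If a finite transitive group `G` on `Ω` has a transitive
minimal normal subgroup `N = T_1 × ⋯ × T_k` with the `T_i` nonabelian simple, then `G_α`
permutes the point stabilizers `(T_i)_α` transitively by conjugation. -/
theorem stmt_14 {G : Type*} [Group G] [Finite G] {Ω : Type*} [Finite Ω]
    [MulAction G Ω] [FaithfulSMul G Ω]
    (htrans : MulAction.IsPretransitive G Ω)
    (N : Subgroup G) (hmin : IsMinimalNormal N)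
    (hNtrans : ∀ β γ : Ω, ∃ n ∈ N, n • β = γ)
    (k : ℕ) (hk : 1 ≤ k) (T : Fin k → Subgroup G)
    (hTle : ∀ i, T i ≤ N)
    (hTsimple : ∀ i, IsSimpleGroup (T i) ∧ ¬ (∀ x y : ↥(T i), x * y = y * x))
    (hTcomm : ∀ i j, i ≠ j → ∀ x ∈ T i, ∀ y ∈ T j, x * y = y * x)
    (hTsup : (⨆ i, T i) = N)
    (hTind : ∀ i, T i ⊓ (⨆ j ∈ ({i}ᶜ : Set (Fin k)), T j) = ⊥)
    (α : Ω) :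
    ∀ i j, ∃ g ∈ MulAction.stabilizer G α, ∀ x : G,
      g * x * g⁻¹ ∈ T i ⊓ MulAction.stabilizer G α ↔
        x ∈ T j ⊓ MulAction.stabilizer G α :=
  stmt_14_general N hmin hNtrans k T hTsimple hTcomm hTsup hTind α
end
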